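/- arXiv:2509.10893 — 3 statements merged into one kernel-verified Lean document; each statement's English description precedes it below -/
import Mathlib

section
/- Let G be a compact Hausdorff topological group acting continuously on topological spaces E and B, and let p : E → B be a continuous equivariant map. Then p possesses an equivariant covering function if and only if there exists an extended equivariant covering function over all of B^I. -/
/-!
Restricting an extended covering function to `s = 0` gives a covering function. Conversely,
given `λ`, lift from `e` both the backward path `t ↦ α (s - t)` and the forward path
`t ↦ α (s + t)`, and splice the two lifts at time `s`. Both lifts start at `e`, so the spliced
path depends continuously on `(e, α, s, t)`; it is equivariant because `λ` is and `G` acts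
trivially on the time parameter.
-/

open unitInterval

/-- `p` possesses an equivariant covering function: a continuous equivariant map
`λ : Δ → E^I`, where `Δ = {(e, α) ∈ E × B^I | α 0 = p e}`, with `λ (e, α) 0 = e` and
`p (λ (e, α) t) = α t`. -/
def HasEquivCoveringFunction (G : Type*) [Group G] [TopologicalSpace G]
    {E B : Type*} [TopologicalSpace E] [TopologicalSpace B]
    [MulAction G E] [MulAction G B] [ContinuousSMul G E] [ContinuousSMul G B]
    (p : E → B) : Prop :=
  ∃ lam : {q : E × C(unitInterval, B) // q.2 0 = p q.1} → C(unitInterval, E),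
    Continuous lam ∧
    (∀ (g : G) (q q' : {q : E × C(unitInterval, B) // q.2 0 = p q.1}),
      q'.1 = g • q.1 → lam q' = g • lam q) ∧
    (∀ q, lam q 0 = q.1.1) ∧
    (∀ q t, p (lam q t) = q.1.2 t)

/-- `p` possesses an extended equivariant covering function over all of `B^I`: a continuous
equivariant map `Λ : Δ_{B^I} → E^I`, where
`Δ_{B^I} = {(e, α, s) ∈ E × B^I × [0,1] | α s = p e}` (with `G` acting trivially on `[0,1]`),
with `Λ (e, α, s) s = e` and `p (Λ (e, α, s) t) = α t`. -/
def HasExtendedEquivCoveringFunction (G : Type*) [Group G] [TopologicalSpace G]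
    {E B : Type*} [TopologicalSpace E] [TopologicalSpace B]
    [MulAction G E] [MulAction G B] [ContinuousSMul G E] [ContinuousSMul G B]
    (p : E → B) : Prop :=
  ∃ Lam : {q : E × C(unitInterval, B) × unitInterval // q.2.1 q.2.2 = p q.1} →
      C(unitInterval, E),
    Continuous Lam ∧
    (∀ (g : G) (q q' : {q : E × C(unitInterval, B) × unitInterval // q.2.1 q.2.2 = p q.1}),
      q'.1.1 = g • q.1.1 → q'.1.2.1 = g • q.1.2.1 → q'.1.2.2 = q.1.2.2 →
      Lam q' = g • Lam q) ∧
    (∀ q, Lam q q.1.2.2 = q.1.1) ∧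
    (∀ q t, p (Lam q t) = q.1.2.1 t)

open Set

section Paths

variable {X Y : Type*} [TopologicalSpace X] [TopologicalSpace Y]

theorem coe_projIcc_sub_of_le {s t : I} (h : t ≤ s) :
    (projIcc 0 1 zero_le_one ((s : ℝ) - t) : ℝ) = s - t := by
  rw [projIcc_of_mem]
  constructor <;> [exact sub_nonneg.2 h; linarith [s.2.2, t.2.1]]

noncomputable def pathFrom (k : ℝ) : C(C(I, Y) × I, C(I, Y)) :=
  ContinuousMap.curry ⟨fun x => x.1.1 (projIcc 0 1 zero_le_one (x.1.2 + k * x.2)), by fun_prop⟩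

theorem pathFrom_apply (k : ℝ) (α : C(I, Y)) (s t : I) :
    pathFrom k (α, s) t = α (projIcc 0 1 zero_le_one (s + k * t)) :=
  rfl

@[simp]
theorem pathFrom_apply_zero (k : ℝ) (α : C(I, Y)) (s : I) : pathFrom k (α, s) 0 = α s := by
  simp [pathFrom_apply]

theorem pathFrom_neg_one_apply_sub {s t : I} (α : C(I, Y)) (h : t ≤ s) :
    pathFrom (-1) (α, s) (projIcc 0 1 zero_le_one (s - t)) = α t := by
  rw [pathFrom_apply, coe_projIcc_sub_of_le h]
  simp

theorem pathFrom_one_apply_sub {s t : I} (α : C(I, Y)) (h : s ≤ t) :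
    pathFrom 1 (α, s) (projIcc 0 1 zero_le_one (t - s)) = α t := by
  rw [pathFrom_apply, coe_projIcc_sub_of_le h]
  simp

theorem pathFrom_smul {G : Type*} [SMul G Y] [ContinuousConstSMul G Y] (k : ℝ) (g : G)
    (α : C(I, Y)) (s : I) : pathFrom k (g • α, s) = g • pathFrom k (α, s) :=
  rfl

/-- Follows `L x` in reverse up to time `s x`, then `R x`. -/
noncomputable def gluePaths (L R : C(X, C(I, Y))) (s : C(X, I)) (h : ∀ x, L x 0 = R x 0) :
    C(X, C(I, Y)) :=
  ContinuousMap.curry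
    { toFun := fun x =>
        if (x.2 : ℝ) ≤ s x.1 then L x.1 (projIcc 0 1 zero_le_one (s x.1 - x.2))
        else R x.1 (projIcc 0 1 zero_le_one (x.2 - s x.1))
      continuous_toFun := by
        refine Continuous.if_le (by fun_prop) (by fun_prop) (by fun_prop) (by fun_prop) ?_
        intro x hx
        simp [hx, h] }

section GluePaths

variable {L R : C(X, C(I, Y))} {s : C(X, I)} {h : ∀ x, L x 0 = R x 0}

theorem gluePaths_apply_of_le {x : X} {t : I} (hts : t ≤ s x) :
    gluePaths L R s h x t = L x (projIcc 0 1 zero_le_one (s x - t)) :=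
  if_pos hts

theorem gluePaths_apply_of_lt {x : X} {t : I} (hst : s x < t) :
    gluePaths L R s h x t = R x (projIcc 0 1 zero_le_one (t - s x)) :=
  if_neg (not_le.2 hst)

theorem gluePaths_apply_self (x : X) : gluePaths L R s h x (s x) = L x 0 := by
  simp [gluePaths_apply_of_le le_rfl]

theorem gluePaths_eq_smul {G : Type*} [SMul G Y] [ContinuousConstSMul G Y] {g : G} {x x' : X}
    (hL : L x' = g • L x) (hR : R x' = g • R x) (hs : s x' = s x) :
    gluePaths L R s h x' = g • gluePaths L R s h x := by
  ext t
  rw [ContinuousMap.smul_apply]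
  rcases le_or_gt t (s x) with hts | hst
  · rw [gluePaths_apply_of_le (hs ▸ hts), gluePaths_apply_of_le hts, hL, hs]
    rfl
  · rw [gluePaths_apply_of_lt (hs ▸ hst), gluePaths_apply_of_lt hst, hR, hs]
    rfl

end GluePaths

end Paths

section Covering

variable {G E B : Type*} [Group G] [TopologicalSpace G] [TopologicalSpace E] [TopologicalSpace B]
  [MulAction G E] [MulAction G B] [ContinuousSMul G E] [ContinuousSMul G B] {p : E → B}

theorem HasEquivCoveringFunction.hasExtendedEquivCoveringFunction
    (hcov : HasEquivCoveringFunction G p) : HasExtendedEquivCoveringFunction G p := by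
  obtain ⟨lam, hcont, hequiv, hlam_zero, hlift⟩ := hcov
  let liftFrom (k : ℝ) : C({q : E × C(I, B) × I // q.2.1 q.2.2 = p q.1}, C(I, E)) :=
    ⟨fun q => lam ⟨(q.1.1, pathFrom k q.1.2), (pathFrom_apply_zero k _ _).trans q.2⟩,
      hcont.comp (by fun_prop)⟩
  have liftFrom_zero (k : ℝ) q : liftFrom k q 0 = q.1.1 := hlam_zero _
  refine ⟨gluePaths (liftFrom (-1)) (liftFrom 1) ⟨fun q => q.1.2.2, by fun_prop⟩
    (fun q => (liftFrom_zero _ q).trans (liftFrom_zero _ q).symm), ContinuousMap.continuous _,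
    ?_, ?_, ?_⟩
  · intro g q q' he hα hs
    have liftFrom_eq_smul (k : ℝ) : liftFrom k q' = g • liftFrom k q := by
      refine hequiv g _ _ (Prod.ext he ?_)
      change pathFrom k q'.1.2 = g • pathFrom k (q.1.2.1, q.1.2.2)
      rw [← pathFrom_smul, ← hα, ← hs]
    exact gluePaths_eq_smul (liftFrom_eq_smul _) (liftFrom_eq_smul _) hs
  · intro q
    exact (gluePaths_apply_self q).trans (hlam_zero _)
  · intro q t
    rcases le_or_gt t q.1.2.2 with hts | hst
    · rw [gluePaths_apply_of_le hts]
      exact (hlift _ _).trans (pathFrom_neg_one_apply_sub _ hts)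
    · rw [gluePaths_apply_of_lt hst]
      exact (hlift _ _).trans (pathFrom_one_apply_sub _ hst.le)

theorem HasExtendedEquivCoveringFunction.hasEquivCoveringFunction
    (hext : HasExtendedEquivCoveringFunction G p) : HasEquivCoveringFunction G p := by
  obtain ⟨Lam, hcont, hequiv, hLam_self, hlift⟩ := hext
  refine ⟨fun q => Lam ⟨(q.1.1, q.1.2, 0), q.2⟩, hcont.comp (by fun_prop), ?_,
    fun q => hLam_self _, fun q => hlift _⟩
  intro g q q' hq
  exact hequiv g _ _ (congrArg Prod.fst hq) (congrArg Prod.snd hq) rfl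

end Covering

theorem hasEquivCoveringFunction_iff_hasExtendedEquivCoveringFunction_general
    (G : Type*) [Group G] [TopologicalSpace G]
    {E B : Type*} [TopologicalSpace E] [TopologicalSpace B]
    [MulAction G E] [MulAction G B] [ContinuousSMul G E] [ContinuousSMul G B]
    (p : E → B) :
    HasEquivCoveringFunction G p ↔ HasExtendedEquivCoveringFunction G p :=
  ⟨HasEquivCoveringFunction.hasExtendedEquivCoveringFunction,
    HasExtendedEquivCoveringFunction.hasEquivCoveringFunction⟩

/-- A continuous equivariant map between `G`-spaces of a compact Hausdorff group `G`
possesses an equivariant covering function if and only if there exists an extended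
equivariant covering function over all of `B^I`. -/
theorem hasEquivCoveringFunction_iff_hasExtendedEquivCoveringFunction
    (G : Type*) [Group G] [TopologicalSpace G] [IsTopologicalGroup G]
    [CompactSpace G] [T2Space G]
    {E B : Type*} [TopologicalSpace E] [TopologicalSpace B]
    [MulAction G E] [MulAction G B] [ContinuousSMul G E] [ContinuousSMul G B]
    (p : E → B) (hp : Continuous p)
    (hpe : ∀ (g : G) (e : E), p (g • e) = g • p e) :
    HasEquivCoveringFunction G p ↔ HasExtendedEquivCoveringFunction G p :=
  hasEquivCoveringFunction_iff_hasExtendedEquivCoveringFunction_general G p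
end

section
/- Let G be a compact Hausdorff topological group acting continuously on topological spaces E and B, and let p : E → B be a continuous equivariant map which is a weakly locally trivial G-fibration. Then p is a local Hurewicz G-fibration, i.e., every point b ∈ B has an open G-invariant neighborhood U such that the restriction p : p⁻¹(U) → U is a Hurewicz G-fibration. -/
open unitInterval Pointwise

/-- `p : E → B` is a Hurewicz `G`-fibration (with the given actions `actE`, `actB` of `G`
on `E` and `B`). -/
def IsHurewiczGFibration.{uX, uG, uE, uB} (G : Type uG) [Group G] [TopologicalSpace G]
    {E : Type uE} {B : Type uB} [TopologicalSpace E] [TopologicalSpace B]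
    (actE : G → E → E) (actB : G → B → B) (p : E → B) : Prop :=
  ∀ (X : Type uX) [TopologicalSpace X] [MulAction G X] [ContinuousSMul G X],
    ∀ (f : X → E) (F : X × unitInterval → B),
      Continuous f → Continuous F →
      (∀ (g : G) (x : X), f (g • x) = actE g (f x)) →
      (∀ (g : G) (x : X) (t : unitInterval), F (g • x, t) = actB g (F (x, t))) →
      (∀ x : X, F (x, 0) = p (f x)) →
      ∃ Ft : X × unitInterval → E, Continuous Ft ∧
        (∀ (g : G) (x : X) (t : unitInterval), Ft (g • x, t) = actE g (Ft (x, t))) ∧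
        (∀ z : X × unitInterval, p (Ft z) = F z) ∧
        (∀ x : X, Ft (x, 0) = f x)

/-- For a `G`-invariant set `U ⊆ B` and an equivariant map `p : E → B`, this says that the
restriction `p : p⁻¹(U) → U` (with the restricted `G`-actions) is a Hurewicz
`G`-fibration. -/
def IsRestrictedHurewiczGFibration.{uX, uG, uE, uB} (G : Type uG) [Group G] [TopologicalSpace G]
    {E : Type uE} {B : Type uB} [TopologicalSpace E] [TopologicalSpace B]
    [MulAction G E] [MulAction G B]
    (p : E → B) (hpe : ∀ (g : G) (e : E), p (g • e) = g • p e)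
    (U : Set B) (hinv : ∀ g : G, g • U = U) : Prop :=
  IsHurewiczGFibration.{uX} G
    (fun (g : G) (e : p ⁻¹' U) => (⟨g • e.1, by
      have he : g • p e.1 ∈ g • U := Set.smul_mem_smul_set e.2
      rw [hinv g] at he
      rwa [Set.mem_preimage, hpe]⟩ : p ⁻¹' U))
    (fun (g : G) (b : U) => (⟨g • b.1, by
      have hb : g • b.1 ∈ g • U := Set.smul_mem_smul_set b.2
      rwa [hinv g] at hb⟩ : U))
    (fun e : p ⁻¹' U => (⟨p e.1, e.2⟩ : U))

/-- `p : E → B` is a weakly locally trivial `G`-fibration: every point of `B` has an open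
`G`-invariant neighborhood `U` and a continuous `G`-equivariant map
`ω : U × p⁻¹(U) → p⁻¹(U)` (with the diagonal `G`-action on `U × p⁻¹(U)`) such that
`p (ω (b, e)) = b` and `ω (p e, e) = e`. -/
def IsWeaklyLocallyTrivialGFibration (G : Type*) [Group G] [TopologicalSpace G]
    {E B : Type*} [TopologicalSpace E] [TopologicalSpace B]
    [MulAction G E] [MulAction G B]
    (p : E → B) (hpe : ∀ (g : G) (e : E), p (g • e) = g • p e) : Prop :=
  ∀ b : B, ∃ U : Set B, IsOpen U ∧ b ∈ U ∧ ∃ hinv : ∀ g : G, g • U = U,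
    ∃ ω : ↥U × ↥(p ⁻¹' U) → ↥(p ⁻¹' U), Continuous ω ∧
      (∀ (g : G) (z : ↥U × ↥(p ⁻¹' U)),
        ((ω (⟨g • z.1.1, by
            have hz : g • (z.1.1 : B) ∈ g • U := Set.smul_mem_smul_set z.1.2
            rwa [hinv g] at hz⟩,
          ⟨g • z.2.1, by
            have hz : g • p (z.2.1 : E) ∈ g • U := Set.smul_mem_smul_set z.2.2
            rw [hinv g] at hz
            rwa [Set.mem_preimage, hpe]⟩)).1 : E) = g • ((ω z).1 : E)) ∧
      (∀ z : ↥U × ↥(p ⁻¹' U), p ((ω z).1 : E) = (z.1.1 : B)) ∧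
      (∀ e : ↥(p ⁻¹' U), ω (⟨p e.1, e.2⟩, e) = e)

theorem isHurewiczGFibration_of_equivariant_transport.{uX, uG, uE, uB}
    {G : Type uG} [Group G] [TopologicalSpace G]
    {E : Type uE} {B : Type uB} [TopologicalSpace E] [TopologicalSpace B]
    (actE : G → E → E) (actB : G → B → B) (p : E → B)
    (ω : B × E → E) (hω : Continuous ω)
    (hω_equivariant : ∀ g b e, ω (actB g b, actE g e) = actE g (ω (b, e)))
    (hp_ω : ∀ b e, p (ω (b, e)) = b) (hω_p : ∀ e, ω (p e, e) = e) :
    IsHurewiczGFibration.{uX} G actE actB p := by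
  intro X _ _ _ f F hf hF hf_equivariant hF_equivariant hF₀
  refine ⟨fun z => ω (F z, f z.1), hω.comp (hF.prodMk (hf.comp continuous_fst)),
    fun g x t => ?_, fun z => hp_ω _ _, fun x => ?_⟩
  · simp only [hF_equivariant, hf_equivariant, hω_equivariant]
  · simp only [hF₀, hω_p]

theorem local_isHurewiczGFibration_of_weaklyLocallyTrivial_general
    (G : Type*) [Group G] [TopologicalSpace G]
    {E B : Type*} [TopologicalSpace E] [TopologicalSpace B]
    [MulAction G E] [MulAction G B]
    (p : E → B)
    (hpe : ∀ (g : G) (e : E), p (g • e) = g • p e)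
    (hwlt : IsWeaklyLocallyTrivialGFibration G p hpe) :
    ∀ b : B, ∃ U : Set B, IsOpen U ∧ b ∈ U ∧ ∃ hinv : ∀ g : G, g • U = U,
      IsRestrictedHurewiczGFibration G p hpe U hinv := by
  intro b
  obtain ⟨U, hU, hbU, hinv, ω, hω, hω_equivariant, hp_ω, hω_p⟩ := hwlt b
  exact ⟨U, hU, hbU, hinv, isHurewiczGFibration_of_equivariant_transport _ _ _ ω hω
    (fun g z e => Subtype.ext (hω_equivariant g (z, e))) (fun z e => Subtype.ext (hp_ω (z, e)))
    hω_p⟩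

/-- For a compact Hausdorff group `G`, every weakly locally trivial `G`-fibration is a
local Hurewicz `G`-fibration: every point of `B` has an open `G`-invariant neighborhood `U`
such that the restriction `p : p⁻¹(U) → U` is a Hurewicz `G`-fibration. -/
theorem local_isHurewiczGFibration_of_weaklyLocallyTrivial
    (G : Type*) [Group G] [TopologicalSpace G] [IsTopologicalGroup G]
    [CompactSpace G] [T2Space G]
    {E B : Type*} [TopologicalSpace E] [TopologicalSpace B]
    [MulAction G E] [MulAction G B] [ContinuousSMul G E] [ContinuousSMul G B]
    (p : E → B) (hp : Continuous p)
    (hpe : ∀ (g : G) (e : E), p (g • e) = g • p e)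
    (hwlt : IsWeaklyLocallyTrivialGFibration G p hpe) :
    ∀ b : B, ∃ U : Set B, IsOpen U ∧ b ∈ U ∧ ∃ hinv : ∀ g : G, g • U = U,
      IsRestrictedHurewiczGFibration G p hpe U hinv :=
  local_isHurewiczGFibration_of_weaklyLocallyTrivial_general G p hpe hwlt
end

section
/- Let G be a compact Hausdorff topological group acting continuously on topological spaces E and B, where B is paracompact Hausdorff, and let p : E → B be a continuous equivariant map which is a weakly locally trivial G-fibration. Then p is a Hurewicz G-fibration. -/
open unitInterval Pointwise

/-!
Cover `B` by the invariant open sets `U b` carrying the maps `ω`, and choose a `G`-invariant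
partition of unity `φ` subordinate to it: take the supremum of an arbitrary one over each orbit of
the compact group `G`, then renormalise.

A list `[i₀, …, iₙ₋₁]` of indices stands for lifting a path in `n` equal steps, the `j`-th one with
`ω iⱼ`; it applies to `x` when `F (x, ·)` maps the `j`-th step into `U iⱼ` for every `j`. Products
of infima of `φ` along the steps, made locally finite by subtracting from each the length of its
list times the total weight of the shorter lists, give a partition of unity `ν` on `X` indexed by
lists and subordinate to these sets. The lift at `x` cuts the time axis into consecutive blocks of
lengths `ν l x` and, inside the block of `l`, moves the current point with the `ω`'s of `l` through
its grid points. Since `ω (p e, e) = e`, blocks of weight zero and steps of length zero do nothing,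
which makes the lift continuous; every ingredient is invariant or equivariant, which makes it
equivariant.
-/

open Set Filter Topology Function

section LocallyFinite

variable {ι X Y B : Type*} [TopologicalSpace X] [TopologicalSpace Y] [TopologicalSpace B]

theorem IsCompact.isOpen_setOf_forall_mem {K : Set Y} (hK : IsCompact K) {γ : X × Y → B}
    (hγ : Continuous γ) {O : Set B} (hO : IsOpen O) : IsOpen {x | ∀ t ∈ K, γ (x, t) ∈ O} :=
  isOpen_iff_mem_nhds.2 fun _ hx => hK.eventually_forall_of_forall_eventually fun t ht =>
    hγ.continuousAt.preimage_mem_nhds (hO.mem_nhds (hx t ht))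

theorem LocallyFinite.exists_isOpen_superset_finite {s : ι → Set B} (hs : LocallyFinite s)
    {K : Set B} (hK : IsCompact K) :
    ∃ O, IsOpen O ∧ K ⊆ O ∧ {i | (s i ∩ O).Nonempty}.Finite := by
  choose V hV hVfin using hs
  obtain ⟨F, -, hKF⟩ := hK.elim_nhds_subcover (fun b => interior (V b))
    fun b _ => interior_mem_nhds.2 (hV b)
  refine ⟨⋃ b ∈ F, interior (V b), isOpen_biUnion fun b _ => isOpen_interior, hKF,
    (F.finite_toSet.biUnion fun b _ => hVfin b).subset ?_⟩
  rintro i ⟨y, hyi, hyO⟩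
  obtain ⟨b, hb, hyb⟩ := mem_iUnion₂.1 hyO
  exact mem_iUnion₂.2 ⟨b, hb, y, hyi, interior_subset hyb⟩

theorem LocallyFinite.setOf_exists_mem_of_isCompact {s : ι → Set B} (hs : LocallyFinite s)
    {K : Set Y} (hK : IsCompact K) {γ : X × Y → B} (hγ : Continuous γ) :
    LocallyFinite fun i => {x | ∃ t ∈ K, γ (x, t) ∈ s i} := by
  intro x₀
  obtain ⟨O, hO, hKO, hfin⟩ :=
    hs.exists_isOpen_superset_finite (hK.image (hγ.comp (Continuous.prodMk_right x₀)))
  refine ⟨{x | ∀ t ∈ K, γ (x, t) ∈ O},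
    (hK.isOpen_setOf_forall_mem hγ hO).mem_nhds fun t ht => hKO ⟨t, ht, rfl⟩, hfin.subset ?_⟩
  rintro i ⟨x, ⟨t, ht, hti⟩, hxO⟩
  exact ⟨γ (x, t), hti, hxO t ht⟩

theorem LocallyFinite.setOf_forall_mem_list {s : ι → Set X} (hs : LocallyFinite s) (m : ℕ) :
    LocallyFinite fun l : {l : List ι // l.length < m} => {x | ∀ i ∈ l.1, x ∈ s i} := by
  intro x₀
  obtain ⟨V, hV, hfin⟩ := hs x₀
  have : Finite {i | (s i ∩ V).Nonempty} := hfin.to_subtype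
  refine ⟨V, hV, (((List.finite_length_lt {i | (s i ∩ V).Nonempty} m).image
    (List.map Subtype.val)).preimage Subtype.val_injective.injOn).subset ?_⟩
  rintro ⟨l, hl⟩ ⟨x, hxl, hxV⟩
  refine ⟨l.attachWith _ fun i hi => ⟨x, hxl i hi, hxV⟩, (List.length_attachWith ..).trans_lt hl,
    List.attachWith_map_subtype_val _⟩

end LocallyFinite

theorem Finset.sum_map_sort {α M : Type*} [LinearOrder α] [AddCommMonoid M] (s : Finset α)
    (f : α → M) : (s.sort.map f).sum = ∑ i ∈ s, f i :=
  ((s.sort_perm_toList _).map f).sum_eq.trans (s.sum_map_toList f)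

theorem Finset.sort_filter {α : Type*} [LinearOrder α] (s : Finset α) (q : α → Prop)
    [DecidablePred q] : s.sort.filter q = (s.filter q).sort :=
  List.Perm.eq_of_pairwise' ((s.pairwise_sort _).filter _) ((s.filter q).pairwise_sort _) <|
    (List.perm_ext_iff_of_nodup ((s.sort_nodup _).filter _) ((s.filter q).sort_nodup _)).2
      fun a => by simp

theorem csInf_image_le_of_nonneg {h : ℝ → ℝ} (h0 : ∀ t, 0 ≤ h t) {s : Set ℝ} {t : ℝ} (ht : t ∈ s) :
    sInf (h '' s) ≤ h t :=
  csInf_le ⟨0, by rintro _ ⟨u, -, rfl⟩; exact h0 u⟩ (mem_image_of_mem h ht)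

section Normalize

variable {ι X : Type*} [TopologicalSpace X]

theorem PartitionOfUnity.exists_eq_div_finsum {ψ : ι → X → ℝ} (hc : ∀ i, Continuous (ψ i))
    (hlf : LocallyFinite fun i => support (ψ i)) (h0 : ∀ i x, 0 ≤ ψ i x)
    (hpos : ∀ x, ∃ i, 0 < ψ i x) :
    ∃ ν : PartitionOfUnity ι X, (∀ i, support (ν i) = support (ψ i)) ∧
      ∀ i x, ν i x = ψ i x / ∑ᶠ j, ψ j x := by
  have hsum : ∀ x, 0 < ∑ᶠ j, ψ j x := fun x =>
    let ⟨i, hi⟩ := hpos x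
    hi.trans_le (single_le_finsum i (hlf.point_finite x) fun j => h0 j x)
  have hsupp : ∀ i, support (fun x => ψ i x / ∑ᶠ j, ψ j x) = support (ψ i) := fun i => by
    ext x; simp [(hsum x).ne']
  have hsum_div : ∀ x, ∑ᶠ i, ψ i x / ∑ᶠ j, ψ j x = 1 := fun x => by
    simp_rw [div_eq_mul_inv, ← finsum_mul, mul_inv_cancel₀ (hsum x).ne']
  refine ⟨⟨fun i => ⟨fun x => ψ i x / ∑ᶠ j, ψ j x,
    (hc i).div (continuous_finsum hc hlf) fun x => (hsum x).ne'⟩, ?_,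
    fun i x => div_nonneg (h0 i x) (hsum x).le, fun x _ => hsum_div x,
    fun x => (hsum_div x).le⟩, hsupp, fun i x => rfl⟩
  simpa only [ContinuousMap.coe_mk, hsupp] using hlf

theorem PartitionOfUnity.sum_finset_le_one {ι X : Type*} [TopologicalSpace X]
    (ν : PartitionOfUnity ι X) (s : Finset ι) (x : X) : ∑ i ∈ s, ν i x ≤ 1 := by
  classical
  calc ∑ i ∈ s, ν i x ≤ ∑ i ∈ s ∪ ν.finsupport x, ν i x :=
        Finset.sum_le_sum_of_subset_of_nonneg Finset.subset_union_left fun i _ _ => ν.nonneg i x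
    _ = 1 := ν.sum_finsupport' (mem_univ x) Finset.subset_union_right

end Normalize

section Graded

variable {ι X : Type*}

/-- If `ρ ≤ 1` and `0 < ρ i₀ x`, the factor `deg i` makes `gradedWeight deg ρ i x` vanish as
soon as `deg i > max (deg i₀) (1 / ρ i₀ x)`; as `ρ i₀` stays away from `0` near `x`, this makes
the family locally finite. -/
noncomputable def gradedWeight (deg : ι → ℕ) (ρ : ι → X → ℝ) (i : ι) (x : X) : ℝ :=
  max 0 (ρ i x - deg i * ∑ᶠ j : {j // deg j < deg i}, ρ j x)

variable {deg : ι → ℕ} {ρ : ι → X → ℝ}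

theorem exists_minimal_degree {x : X} (hx : ∃ i, ρ i x ≠ 0) :
    ∃ i, ρ i x ≠ 0 ∧ ∀ j, deg j < deg i → ρ j x = 0 := by
  classical
  have h : ∃ m, ∃ i, deg i = m ∧ ρ i x ≠ 0 := let ⟨i, hi⟩ := hx; ⟨_, i, rfl, hi⟩
  obtain ⟨i, hi, hρi⟩ := Nat.find_spec h
  exact ⟨i, hρi, fun j hj => by_contra fun hρj => Nat.find_min h (hi ▸ hj) ⟨j, rfl, hρj⟩⟩

theorem support_gradedWeight_subset (h0 : ∀ i x, 0 ≤ ρ i x) (i : ι) :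
    support (gradedWeight deg ρ i) ⊆ support (ρ i) := fun x hx hρ => hx <| by
  simp only [gradedWeight, hρ, zero_sub, max_eq_left_iff, Left.neg_nonpos_iff]
  exact mul_nonneg (Nat.cast_nonneg _) (finsum_nonneg fun j => h0 j x)

theorem gradedWeight_pos_of_minimal (h0 : ∀ i x, 0 ≤ ρ i x) {i : ι} {x : X} (hi : ρ i x ≠ 0)
    (hmin : ∀ j, deg j < deg i → ρ j x = 0) : 0 < gradedWeight deg ρ i x := by
  have : ∑ᶠ j : {j // deg j < deg i}, ρ j x = 0 :=
    finsum_eq_zero_of_forall_eq_zero fun j => hmin j j.2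
  simpa [gradedWeight, this] using (h0 i x).lt_of_ne' hi

variable [TopologicalSpace X]

theorem le_finsum_lower_degree (hlf : ∀ m, LocallyFinite fun i : {i // deg i < m} => support (ρ i))
    (h0 : ∀ i x, 0 ≤ ρ i x) {i : ι} {m : ℕ} (hi : deg i < m) (x : X) :
    ρ i x ≤ ∑ᶠ j : {j // deg j < m}, ρ j x :=
  single_le_finsum (f := fun j : {j // deg j < m} => ρ j x) ⟨i, hi⟩ ((hlf m).point_finite x)
    fun j => h0 j x

theorem continuous_gradedWeight (hc : ∀ i, Continuous (ρ i))
    (hlf : ∀ m, LocallyFinite fun i : {i // deg i < m} => support (ρ i)) (i : ι) :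
    Continuous (gradedWeight deg ρ i) :=
  continuous_const.max <| (hc i).sub <| continuous_const.mul <|
    continuous_finsum (fun j => hc j) (hlf _)

theorem locallyFinite_support_gradedWeight
    (hlf : ∀ m, LocallyFinite fun i : {i // deg i < m} => support (ρ i))
    (hc : ∀ i, Continuous (ρ i)) (h0 : ∀ i x, 0 ≤ ρ i x) (h1 : ∀ i x, ρ i x ≤ 1)
    (hpos : ∀ x, ∃ i, ρ i x ≠ 0) :
    LocallyFinite fun i => support (gradedWeight deg ρ i) := by
  intro x₀
  obtain ⟨i₀, hi₀⟩ := hpos x₀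
  set ε := ρ i₀ x₀
  have hε : 0 < ε := (h0 i₀ x₀).lt_of_ne' hi₀
  set M := max (deg i₀) ⌈2 / ε⌉₊
  obtain ⟨V, hV, hVfin⟩ := hlf (M + 1) x₀
  refine ⟨V ∩ {x | ε / 2 < ρ i₀ x},
    inter_mem hV ((hc i₀).continuousAt.preimage_mem_nhds (Ioi_mem_nhds (by linarith))),
    (hVfin.image Subtype.val).subset ?_⟩
  rintro i ⟨x, hxi, hxV, hxε⟩
  by_contra hM
  refine hxi (max_eq_left ?_)
  have hdeg : M < deg i := by
    by_contra h
    exact hM ⟨⟨i, by omega⟩, ⟨x, support_gradedWeight_subset h0 i hxi, hxV⟩, rfl⟩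
  have hsum : ε / 2 < ∑ᶠ j : {j // deg j < deg i}, ρ j x :=
    hxε.trans_le (le_finsum_lower_degree hlf h0 ((le_max_left _ _).trans_lt hdeg) x)
  have hdeg' : 2 / ε < deg i :=
    (Nat.le_ceil _).trans_lt (Nat.cast_lt.2 ((le_max_right _ _).trans_lt hdeg))
  have : 1 < deg i * ∑ᶠ j : {j // deg j < deg i}, ρ j x := by
    calc (1 : ℝ) = 2 / ε * (ε / 2) := by field_simp
      _ < deg i * ∑ᶠ j : {j // deg j < deg i}, ρ j x := by
        gcongr
  linarith [h1 i x]

theorem PartitionOfUnity.exists_support_subset_of_graded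
    (hc : ∀ i, Continuous (ρ i)) (h0 : ∀ i x, 0 ≤ ρ i x) (h1 : ∀ i x, ρ i x ≤ 1)
    (hlf : ∀ m, LocallyFinite fun i : {i // deg i < m} => support (ρ i))
    (hpos : ∀ x, ∃ i, ρ i x ≠ 0) :
    ∃ ν : PartitionOfUnity ι X, (∀ i, support (ν i) ⊆ support (ρ i)) ∧
      ∀ x y, (∀ i, ρ i x = ρ i y) → ∀ i, ν i x = ν i y := by
  have hψ0 : ∀ i x, 0 ≤ gradedWeight deg ρ i x := fun i x => le_max_left _ _
  obtain ⟨ν, hνsupp, hν⟩ := PartitionOfUnity.exists_eq_div_finsum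
    (continuous_gradedWeight hc hlf) (locallyFinite_support_gradedWeight hlf hc h0 h1 hpos) hψ0
    fun x => let ⟨i, hi, hmin⟩ := exists_minimal_degree (hpos x)
      ⟨i, gradedWeight_pos_of_minimal h0 hi hmin⟩
  refine ⟨ν, fun i => (hνsupp i).trans_subset (support_gradedWeight_subset h0 i),
    fun x y hxy i => ?_⟩
  simp only [hν, gradedWeight, hxy]

end Graded

section OrbitSup

variable (G : Type*) {B : Type*} [Group G] [MulAction G B]

noncomputable def orbitSup (h : B → ℝ) (b : B) : ℝ :=
  sSup ((fun g : G => h (g • b)) '' univ)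

variable {G} {h : B → ℝ}

theorem orbitSup_smul (g : G) (b : B) : orbitSup G h (g • b) = orbitSup G h b := by
  simp only [orbitSup, image_univ, smul_smul]
  exact congrArg sSup ((mul_right_surjective g).range_comp fun g' => h (g' • b))

theorem support_orbitSup_subset (b : B) (hb : orbitSup G h b ≠ 0) : ∃ g : G, h (g • b) ≠ 0 := by
  by_contra! hzero
  have : (fun g : G => h (g • b)) '' univ = {0} :=
    (univ_nonempty.image _).subset_singleton_iff.1 (by rintro _ ⟨g, -, rfl⟩; exact hzero g)
  exact hb (by rw [orbitSup, this, csSup_singleton])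

variable [TopologicalSpace G] [CompactSpace G] [TopologicalSpace B] [ContinuousSMul G B]

theorem continuous_orbitSup (hh : Continuous h) : Continuous (orbitSup G h) :=
  isCompact_univ.continuous_sSup (f := fun b (g : G) => h (g • b))
    (hh.comp (continuous_snd.smul continuous_fst))

theorem le_orbitSup (hh : Continuous h) (g : G) (b : B) : h (g • b) ≤ orbitSup G h b :=
  le_csSup (isCompact_univ.image (hh.comp (continuous_id.smul continuous_const))).bddAbove
    (mem_image_of_mem _ (mem_univ g))

variable (G) in
theorem isClosed_setOf_exists_smul_mem {C : Set B} (hC : IsClosed C) :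
    IsClosed {b | ∃ g : G, g • b ∈ C} := by
  convert isClosedMap_snd_of_compactSpace _ (hC.preimage (continuous_smul (M := G) (X := B)))
  ext b
  exact ⟨fun ⟨g, hg⟩ => ⟨(g, b), hg, rfl⟩, fun ⟨⟨g, _⟩, hg, hb⟩ => hb ▸ ⟨g, hg⟩⟩

end OrbitSup

theorem exists_invariant_partitionOfUnity_isSubordinate (G : Type*) {ι B : Type*} [Group G]
    [TopologicalSpace G] [CompactSpace G] [TopologicalSpace B] [ParacompactSpace B] [T2Space B]
    [MulAction G B] [ContinuousSMul G B] (U : ι → Set B) (hUo : ∀ i, IsOpen (U i))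
    (hUinv : ∀ i (g : G), g • U i = U i) (hU : ⋃ i, U i = univ) :
    ∃ φ : PartitionOfUnity ι B, φ.IsSubordinate U ∧ ∀ i (g : G) b, φ i (g • b) = φ i b := by
  obtain ⟨f, hfU⟩ := PartitionOfUnity.exists_isSubordinate isClosed_univ U hUo hU.ge
  have hsupp : ∀ i, support (orbitSup G (f i)) ⊆ {b | ∃ g : G, g • b ∈ support (f i)} :=
    fun i => support_orbitSup_subset
  obtain ⟨φ, hφsupp, hφ⟩ := PartitionOfUnity.exists_eq_div_finsum
    (fun i => continuous_orbitSup (f i).continuous)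
    ((f.locallyFinite.setOf_exists_mem_of_isCompact isCompact_univ
      (continuous_snd.smul continuous_fst)).subset fun i b hb =>
        let ⟨g, hg⟩ := hsupp i hb; ⟨g, mem_univ g, hg⟩)
    (fun i b => (f.nonneg i (1 • b)).trans (le_orbitSup (f i).continuous 1 b))
    fun b => let ⟨i, hi⟩ := f.exists_pos (mem_univ b)
      ⟨i, hi.trans_le (by simpa using le_orbitSup (f i).continuous (1 : G) b)⟩
  refine ⟨φ, fun i => ?_, fun i g b => by simp only [hφ, orbitSup_smul]⟩
  rw [tsupport, hφsupp]
  have hsupp' : support (orbitSup G (f i)) ⊆ {b | ∃ g : G, g • b ∈ tsupport (f i)} :=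
    fun b hb => let ⟨g, hg⟩ := hsupp i hb; ⟨g, subset_tsupport _ hg⟩
  refine (closure_minimal hsupp' (isClosed_setOf_exists_smul_mem G (isClosed_tsupport _))).trans ?_
  rintro b ⟨g, hg⟩
  exact smul_mem_smul_set_iff.1 ((hUinv i g).symm ▸ hfU i hg)

section PathCover

variable {ι X B : Type*}

def gridIcc (n j : ℕ) : Set ℝ := Icc ((j : ℝ) / n) ((j + 1 : ℝ) / n)

theorem isCompact_gridIcc (n j : ℕ) : IsCompact (gridIcc n j) := isCompact_Icc

theorem gridIcc_subset_Icc {n j : ℕ} (hj : j < n) : gridIcc n j ⊆ Icc 0 1 := by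
  have hn : (0 : ℝ) < n := by exact_mod_cast (Nat.zero_le j).trans_lt hj
  have hj' : (j + 1 : ℝ) ≤ n := by exact_mod_cast hj
  exact Icc_subset_Icc (by positivity) ((div_le_one hn).2 hj')

theorem left_mem_gridIcc {n : ℕ} (hn : 0 < n) (j : ℕ) : (j : ℝ) / n ∈ gridIcc n j :=
  left_mem_Icc.2 (by gcongr; linarith)

def pathCover (U : ι → Set B) (γ : X × ℝ → B) (l : List ι) : Set X :=
  {x | l ≠ [] ∧ ∀ j (hj : j < l.length), ∀ t ∈ gridIcc l.length j, γ (x, t) ∈ U l[j]}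

noncomputable def pathWeight (φ : ι → B → ℝ) (γ : X × ℝ → B) (l : List ι) (x : X) : ℝ :=
  if l = [] then 0
  else ∏ j : Fin l.length, sInf ((fun t => φ l[j] (γ (x, t))) '' gridIcc l.length j)

variable {φ : ι → B → ℝ} {γ : X × ℝ → B}

theorem pathWeight_nonneg (h0 : ∀ i b, 0 ≤ φ i b) (l : List ι) (x : X) :
    0 ≤ pathWeight φ γ l x := by
  unfold pathWeight
  split_ifs
  · exact le_rfl
  · exact Finset.prod_nonneg fun j _ => Real.sInf_nonneg (by rintro _ ⟨t, -, rfl⟩; exact h0 _ _)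

theorem pathWeight_le_one (h0 : ∀ i b, 0 ≤ φ i b) (h1 : ∀ i b, φ i b ≤ 1) (l : List ι) (x : X) :
    pathWeight φ γ l x ≤ 1 := by
  unfold pathWeight
  split_ifs with hl
  · exact zero_le_one
  · have hn : 0 < l.length := List.length_pos_iff.2 hl
    exact Finset.prod_le_one (fun j _ => Real.sInf_nonneg (by rintro _ ⟨t, -, rfl⟩; exact h0 _ _))
      fun j _ => (csInf_image_le_of_nonneg (fun t => h0 _ _) (left_mem_gridIcc hn j)).trans (h1 _ _)

variable [TopologicalSpace X] [TopologicalSpace B]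

theorem continuous_pathWeight (hφ : ∀ i, Continuous (φ i)) (hγ : Continuous γ) (l : List ι) :
    Continuous (pathWeight φ γ l) := by
  unfold pathWeight
  split_ifs
  · exact continuous_const
  · exact continuous_finsetProd _ fun j _ =>
      (isCompact_gridIcc _ _).continuous_sInf ((hφ _).comp hγ)

theorem pathWeight_ne_zero_iff (hφ : ∀ i, Continuous (φ i)) (h0 : ∀ i b, 0 ≤ φ i b)
    (hγ : Continuous γ) {l : List ι} {x : X} :
    pathWeight φ γ l x ≠ 0 ↔
      l ≠ [] ∧ ∀ j (hj : j < l.length), ∀ t ∈ gridIcc l.length j, 0 < φ l[j] (γ (x, t)) := by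
  by_cases hl : l = []
  · simp [pathWeight, hl]
  have hn : 0 < l.length := List.length_pos_iff.2 hl
  have hdip : ∀ j : Fin l.length,
      sInf ((fun t => φ l[j] (γ (x, t))) '' gridIcc l.length j) ≠ 0 ↔
        ∀ t ∈ gridIcc l.length j, 0 < φ l[j] (γ (x, t)) := by
    intro j
    have hcont : Continuous fun t => φ l[j] (γ (x, t)) :=
      (hφ _).comp (hγ.comp (Continuous.prodMk_right x))
    obtain ⟨t₀, ht₀, hmin⟩ := ((isCompact_gridIcc _ _).image hcont).sInf_mem
      ((nonempty_of_mem (left_mem_gridIcc hn j)).image _)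
    rw [← hmin]
    exact ⟨fun h t ht => ((h0 _ _).lt_of_ne' h).trans_le
      (hmin.trans_le (csInf_image_le_of_nonneg (fun t => h0 _ _) ht)),
      fun h => (h t₀ ht₀).ne'⟩
  rw [pathWeight, if_neg hl, Finset.prod_ne_zero_iff]
  simp only [ne_eq, hl, not_false_eq_true, true_and]
  exact ⟨fun h j hj => (hdip ⟨j, hj⟩).1 (h _ (Finset.mem_univ _)),
    fun h j _ => (hdip j).2 (h j j.2)⟩

end PathCover

section PathPartition

variable {ι X B : Type*} [TopologicalSpace X] [TopologicalSpace B] {φ : PartitionOfUnity ι B}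
  {γ : X × ℝ → B}

theorem tsupport_pathWeight_subset {U : ι → Set B} (hφU : φ.IsSubordinate U) (hγ : Continuous γ)
    (l : List ι) : tsupport (pathWeight (fun i => φ i) γ l) ⊆ pathCover U γ l := by
  set S := {x | l ≠ []} ∩ ⋂ (j) (hj : j < l.length), ⋂ t ∈ gridIcc l.length j,
    (fun x => γ (x, t)) ⁻¹' tsupport (φ l[j])
  have hclosed : IsClosed S := isClosed_const.inter <| isClosed_iInter fun j =>
    isClosed_iInter fun _ => isClosed_biInter fun t _ =>
      (isClosed_tsupport _).preimage (hγ.comp (Continuous.prodMk_left t))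
  have hsupp : support (pathWeight (fun i => φ i) γ l) ⊆ S := fun x hx => by
    obtain ⟨hl, hpos⟩ := (pathWeight_ne_zero_iff (fun i => (φ i).continuous) φ.nonneg hγ).1 hx
    exact ⟨hl, mem_iInter₂.2 fun j hj => mem_iInter₂.2 fun t ht =>
      subset_tsupport _ (hpos j hj t ht).ne'⟩
  refine (closure_minimal hsupp hclosed).trans fun x ⟨hl, hx⟩ => ⟨hl, fun j hj t ht => ?_⟩
  exact hφU _ (mem_iInter₂.1 (mem_iInter₂.1 hx j hj) t ht)

theorem locallyFinite_support_pathWeight (hγ : Continuous γ) (m : ℕ) :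
    LocallyFinite fun l : {l : List ι // l.length < m} =>
      support (pathWeight (fun i => φ i) γ l) := by
  refine ((φ.locallyFinite.setOf_exists_mem_of_isCompact (isCompact_Icc (a := (0 : ℝ)) (b := 1))
    hγ).setOf_forall_mem_list m).subset fun l x hx i hi => ?_
  obtain ⟨hl, hpos⟩ := (pathWeight_ne_zero_iff (fun i => (φ i).continuous) φ.nonneg hγ).1 hx
  obtain ⟨j, hj, rfl⟩ := List.getElem_of_mem hi
  exact ⟨_, gridIcc_subset_Icc hj (left_mem_gridIcc (List.length_pos_iff.2 hl) j),
    (hpos j hj _ (left_mem_gridIcc (List.length_pos_iff.2 hl) j)).ne'⟩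

theorem exists_pathWeight_ne_zero (hγ : Continuous γ) (x : X) :
    ∃ l, pathWeight (fun i => φ i) γ l x ≠ 0 := by
  have hopen : ∀ i, IsOpen {t : ℝ | 0 < φ i (γ (x, t))} := fun i =>
    isOpen_lt continuous_const ((φ i).continuous.comp (hγ.comp (Continuous.prodMk_right x)))
  obtain ⟨δ, hδ, hball⟩ := lebesgue_number_lemma_of_metric (isCompact_Icc (a := (0 : ℝ)) (b := 1))
    hopen fun t _ => mem_iUnion.2 (φ.exists_pos (mem_univ (γ (x, t))))
  obtain ⟨n, hn⟩ := exists_nat_one_div_lt hδ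
  have hstep : ∀ j : Fin (n + 1), ∃ i, ∀ t ∈ gridIcc (n + 1) j, 0 < φ i (γ (x, t)) := by
    intro j
    have hj := left_mem_gridIcc (by positivity : 0 < n + 1) j
    obtain ⟨i, hi⟩ := hball _ (gridIcc_subset_Icc j.2 hj)
    refine ⟨i, fun t ht => hi ?_⟩
    rw [Metric.mem_ball, Real.dist_eq, abs_sub_lt_iff]
    simp only [gridIcc, mem_Icc, Nat.cast_add, Nat.cast_one, add_div] at ht ⊢
    constructor <;> linarith [ht.1, ht.2]
  choose i hi using hstep
  refine ⟨List.ofFn i, (pathWeight_ne_zero_iff (fun i => (φ i).continuous) φ.nonneg hγ).2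
    ⟨by simp, fun j hj t ht => ?_⟩⟩
  simp only [List.length_ofFn, List.getElem_ofFn] at hj ht ⊢
  exact hi ⟨j, hj⟩ t ht

theorem exists_partitionOfUnity_tsupport_subset_pathCover {U : ι → Set B}
    (hφU : φ.IsSubordinate U) (hγ : Continuous γ) :
    ∃ ν : PartitionOfUnity (List ι) X, (∀ l, tsupport (ν l) ⊆ pathCover U γ l) ∧
      ∀ x y, (∀ i t, φ i (γ (x, t)) = φ i (γ (y, t))) → ∀ l, ν l x = ν l y := by
  obtain ⟨ν, hνsupp, hν⟩ := PartitionOfUnity.exists_support_subset_of_graded (deg := List.length)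
    (continuous_pathWeight (fun i => (φ i).continuous) hγ) (pathWeight_nonneg φ.nonneg)
    (pathWeight_le_one φ.nonneg φ.le_one) (locallyFinite_support_pathWeight hγ)
    (exists_pathWeight_ne_zero hγ)
  refine ⟨ν, fun l => (closure_mono (hνsupp l)).trans (tsupport_pathWeight_subset hφU hγ l),
    fun x y hxy => hν x y fun l => ?_⟩
  simp only [pathWeight, hxy]

end PathPartition

section BlockTime

/-- The times at which the block of a list of length `n`, occupying `[a, b]` on the time axis,
passes the grid points `j / n` clamped into `[a, b]`, stopping at time `t`. -/
noncomputable def blockTime (n : ℕ) (a b t : ℝ) (j : ℕ) : ℝ := min (max t 0) (min b (max a (j / n)))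

variable {n : ℕ} {a b t : ℝ}

theorem blockTime_mono : Monotone (blockTime n a b t) := fun _ _ hjk =>
  min_le_min_left _ <| min_le_min_left _ <| max_le_max_left _ <|
    div_le_div_of_nonneg_right (Nat.cast_le.2 hjk) n.cast_nonneg

theorem blockTime_zero (ha : 0 ≤ a) (hab : a ≤ b) : blockTime n a b t 0 = min (max t 0) a := by
  simp [blockTime, ha, hab]

theorem blockTime_self (hn : 0 < n) (hb : b ≤ 1) :
    blockTime n a b t n = min (max t 0) b := by
  have : (n : ℝ) / n = 1 := div_self (by positivity)
  simp only [blockTime, this]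
  congr 1
  exact min_eq_left (hb.trans (le_max_right _ _))

theorem blockTime_of_eq (j : ℕ) : blockTime n a a t j = min (max t 0) a := by
  simp [blockTime]

theorem blockTime_of_nonpos (ht : t ≤ 0) (ha : 0 ≤ a) (hab : a ≤ b) (j : ℕ) :
    blockTime n a b t j = 0 := by
  simp only [blockTime, max_eq_right ht]
  exact min_eq_left (le_min (ha.trans hab) (ha.trans (le_max_left _ _)))

theorem blockTime_mem_gridIcc {j : ℕ}
    (h : blockTime n a b t j < blockTime n a b t (j + 1)) :
    blockTime n a b t j ∈ gridIcc n j ∧ blockTime n a b t (j + 1) ∈ gridIcc n j := by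
  have hq : (j : ℝ) / n ≤ (j + 1 : ℝ) / n := div_le_div_of_nonneg_right (by linarith) n.cast_nonneg
  simp only [blockTime, gridIcc, mem_Icc, Nat.cast_add, Nat.cast_one] at h ⊢
  grind

theorem blockTime_mem_U {ι X B : Type*} {l : List ι} {U : ι → Set B} {γ : X × ℝ → B} {x : X}
    (hx : x ∈ pathCover U γ l ∨ a = b) (j : ℕ) (hj : j < l.length)
    (hlt : blockTime l.length a b t j < blockTime l.length a b t (j + 1)) :
    γ (x, blockTime l.length a b t j) ∈ U l[j] ∧
      γ (x, blockTime l.length a b t (j + 1)) ∈ U l[j] := by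
  rcases hx with ⟨-, hx⟩ | rfl
  · obtain ⟨h1, h2⟩ := blockTime_mem_gridIcc hlt
    exact ⟨hx j hj _ h1, hx j hj _ h2⟩
  · simp [blockTime_of_eq] at hlt

theorem continuous_blockTime {X : Type*} [TopologicalSpace X] {a b : X → ℝ} (ha : Continuous a)
    (hb : Continuous b) (n j : ℕ) :
    Continuous fun z : X × ℝ => blockTime n (a z.1) (b z.1) z.2 j :=
  (continuous_snd.max continuous_const).min
    ((hb.comp continuous_fst).min ((ha.comp continuous_fst).max continuous_const))

end BlockTime

/-- `ω i` is total but only meaningful on `U i × p⁻¹(U i)`; `ω_self` holds everywhere, so that a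
step along a constant path is the identity. -/
structure WeakLocalTrivialization {E B : Type*} [TopologicalSpace E] [TopologicalSpace B]
    (p : E → B) (ι : Type*) where
  U : ι → Set B
  isOpen_U : ∀ i, IsOpen (U i)
  ω : ι → B × E → E
  continuousOn_ω : ∀ i, ContinuousOn (ω i) {z | z.1 ∈ U i ∧ p z.2 ∈ U i}
  p_ω : ∀ i b e, b ∈ U i → p e ∈ U i → p (ω i (b, e)) = b
  ω_self : ∀ i e, ω i (p e, e) = e

namespace WeakLocalTrivialization

variable {ι E B X : Type*} [TopologicalSpace E] [TopologicalSpace B] {p : E → B}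
  (T : WeakLocalTrivialization p ι)

section Block

noncomputable def blockLift (γx : ℝ → B) (l : List ι) (a b t : ℝ) : ℕ → E → E
  | 0, e => e
  | j + 1, e =>
    if hj : j < l.length then
      T.ω l[j] (γx (blockTime l.length a b t (j + 1)), blockLift γx l a b t j e)
    else blockLift γx l a b t j e

variable {γx : ℝ → B} {l : List ι} {a b t : ℝ}

theorem blockLift_succ_of_lt {j : ℕ} (hj : j < l.length) (e : E) :
    T.blockLift γx l a b t (j + 1) e =
      T.ω l[j] (γx (blockTime l.length a b t (j + 1)), T.blockLift γx l a b t j e) := by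
  rw [blockLift, dif_pos hj]

theorem p_blockLift
    (hU : ∀ j (hj : j < l.length), blockTime l.length a b t j < blockTime l.length a b t (j + 1) →
      γx (blockTime l.length a b t j) ∈ T.U l[j] ∧
        γx (blockTime l.length a b t (j + 1)) ∈ T.U l[j])
    {e : E} (he : p e = γx (blockTime l.length a b t 0)) :
    ∀ j ≤ l.length, p (T.blockLift γx l a b t j e) = γx (blockTime l.length a b t j) := by
  intro j hj
  induction j with
  | zero => exact he
  | succ j ih =>
    have hjl : j < l.length := hj
    have ihj := ih hjl.le
    rw [T.blockLift_succ_of_lt hjl]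
    rcases (blockTime_mono (Nat.le_succ j)).eq_or_lt with heq | hlt
    · rw [← heq, ← ihj, T.ω_self, ihj]
    · obtain ⟨h1, h2⟩ := hU j hjl hlt
      exact T.p_ω _ _ _ h2 (ihj ▸ h1)

theorem blockLift_eq_self
    (hconst : ∀ j, blockTime l.length a b t j = blockTime l.length a b t 0)
    {e : E} (he : p e = γx (blockTime l.length a b t 0)) (j : ℕ) :
    T.blockLift γx l a b t j e = e := by
  induction j with
  | zero => rfl
  | succ j ih =>
    unfold blockLift
    split_ifs
    · rw [ih, hconst, ← he, T.ω_self]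
    · exact ih

theorem blockLift_smul {G : Type*} [SMul G E] [SMul G B]
    (hω : ∀ i (g : G) b e, T.ω i (g • b, g • e) = g • T.ω i (b, e)) {g : G} {γx' : ℝ → B}
    (hγ : ∀ s, γx' s = g • γx s) (e : E) (j : ℕ) :
    T.blockLift γx' l a b t j (g • e) = g • T.blockLift γx l a b t j e := by
  induction j with
  | zero => rfl
  | succ j ih =>
    unfold blockLift
    split_ifs
    · rw [ih, hγ, hω]
    · exact ih

theorem p_blockLift_length {γ : X × ℝ → B} {x : X} (ha : 0 ≤ a) (hab : a ≤ b) (hb : b ≤ 1)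
    (hx : x ∈ pathCover T.U γ l ∨ a = b) {e : E} (he : p e = γ (x, min (max t 0) a)) :
    p (T.blockLift (fun s => γ (x, s)) l a b t l.length e) = γ (x, min (max t 0) b) := by
  rcases hx with hx | rfl
  · rw [T.p_blockLift (blockTime_mem_U (Or.inl hx)) (by rwa [blockTime_zero ha hab]) _ le_rfl,
      blockTime_self (List.length_pos_iff.2 hx.1) hb]
  · rwa [T.blockLift_eq_self (fun j => by rw [blockTime_of_eq, blockTime_of_eq])
      (by rwa [blockTime_of_eq])]

variable [TopologicalSpace X]

theorem continuousAt_blockLift {γ : X × ℝ → B} (hγ : Continuous γ) {a b : X → ℝ}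
    (ha : Continuous a) (hb : Continuous b) {e : X × ℝ → E} {z₀ : X × ℝ} (he : ContinuousAt e z₀)
    (hz₀ : z₀.1 ∈ pathCover T.U γ l)
    (hp : ∀ z : X × ℝ, ∀ j ≤ l.length,
      p (T.blockLift (fun s => γ (z.1, s)) l (a z.1) (b z.1) z.2 j (e z)) =
        γ (z.1, blockTime l.length (a z.1) (b z.1) z.2 j)) (j : ℕ) (hj : j ≤ l.length) :
    ContinuousAt (fun z => T.blockLift (fun s => γ (z.1, s)) l (a z.1) (b z.1) z.2 j (e z)) z₀ := by
  induction j with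
  | zero => exact he
  | succ j ih =>
    have hjl : j < l.length := hj
    set τ := fun k (z : X × ℝ) => blockTime l.length (a z.1) (b z.1) z.2 k
    have hτ : ∀ k, Continuous (τ k) := continuous_blockTime ha hb _
    simp only [T.blockLift_succ_of_lt hjl]
    -- Either `ω` is continuous where the `j`-th step evaluates it at `z₀`, or that step is the
    -- identity near `z₀`.
    by_cases hmem : τ j z₀ ∈ gridIcc l.length j ∧ τ (j + 1) z₀ ∈ gridIcc l.length j
    · have hU : ∀ k, τ k z₀ ∈ gridIcc l.length j → ∀ᶠ z in 𝓝 z₀, γ (z.1, τ k z) ∈ T.U l[j] :=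
        fun k hk => (hγ.comp (continuous_fst.prodMk (hτ k))).continuousAt.preimage_mem_nhds
          ((T.isOpen_U _).mem_nhds (hz₀.2 j hjl _ hk))
      refine ((T.continuousOn_ω l[j]) _ ⟨hz₀.2 j hjl _ hmem.2, ?_⟩).tendsto.comp
        (tendsto_nhdsWithin_iff.2 ⟨?_, ?_⟩)
      · rw [hp z₀ j hjl.le]
        exact hz₀.2 j hjl _ hmem.1
      · exact ((hγ.comp (continuous_fst.prodMk (hτ (j + 1)))).continuousAt).prodMk (ih hjl.le)
      · filter_upwards [hU _ hmem.1, hU _ hmem.2] with z h1 h2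
        exact ⟨h2, (hp z j hjl.le).symm ▸ h1⟩
    · have hclosed : IsClosed {z | τ j z ∈ gridIcc l.length j ∧ τ (j + 1) z ∈ gridIcc l.length j} :=
        (isClosed_Icc.preimage (hτ j)).inter (isClosed_Icc.preimage (hτ (j + 1)))
      refine (ih hjl.le).congr
        (eventually_of_mem (hclosed.isOpen_compl.mem_nhds hmem) fun z hz => ?_)
      have heq : τ (j + 1) z = τ j z := ((blockTime_mono j.le_succ).eq_or_lt.resolve_right
        fun hlt => hz (blockTime_mem_gridIcc hlt)).symm
      dsimp only [τ] at heq ⊢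
      rw [heq, ← hp z j hjl.le, T.ω_self]

end Block

variable [TopologicalSpace X] (γ : X × ℝ → B) (ν : PartitionOfUnity (List ι) X)

noncomputable def chainLift (x : X) (t : ℝ) : List (List ι) → ℝ → E → E
  | [], _, e => e
  | l :: L, a, e =>
    chainLift x t L (a + ν l x) (T.blockLift (fun s => γ (x, s)) l a (a + ν l x) t l.length e)

variable {T γ ν}

theorem mem_pathCover_or_eq_add (hν : ∀ l, support (ν l) ⊆ pathCover T.U γ l) (l : List ι)
    (x : X) (a : ℝ) : x ∈ pathCover T.U γ l ∨ a = a + ν l x := by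
  by_cases h : ν l x = 0
  · exact Or.inr (by rw [h, add_zero])
  · exact Or.inl (hν l h)

theorem p_chainLift (hν : ∀ l, support (ν l) ⊆ pathCover T.U γ l) {x : X} {t : ℝ}
    (L : List (List ι)) {a : ℝ} (ha : 0 ≤ a) (hsum : a + (L.map (ν · x)).sum ≤ 1) {e : E}
    (he : p e = γ (x, min (max t 0) a)) :
    p (T.chainLift γ ν x t L a e) = γ (x, min (max t 0) (a + (L.map (ν · x)).sum)) := by
  induction L generalizing a e with
  | nil => simpa [chainLift] using he
  | cons l L ih =>
    have hrest : 0 ≤ (L.map (ν · x)).sum := List.sum_nonneg (by simp [ν.nonneg])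
    simp only [List.map_cons, List.sum_cons] at hsum ⊢
    rw [chainLift, ih (add_nonneg ha (ν.nonneg l x)) (by linarith) (T.p_blockLift_length ha
      (le_add_of_nonneg_right (ν.nonneg l x)) (by linarith) (mem_pathCover_or_eq_add hν l x a) he),
      add_assoc]

theorem chainLift_of_nonpos {x : X} {t : ℝ} (ht : t ≤ 0) (L : List (List ι)) {a : ℝ} (ha : 0 ≤ a)
    {e : E} (he : p e = γ (x, 0)) : T.chainLift γ ν x t L a e = e := by
  induction L generalizing a with
  | nil => rfl
  | cons l L ih =>
    have hab : a ≤ a + ν l x := le_add_of_nonneg_right (ν.nonneg l x)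
    rw [chainLift, T.blockLift_eq_self (fun j => by rw [blockTime_of_nonpos ht ha hab,
      blockTime_of_nonpos ht ha hab]) (by rwa [blockTime_of_nonpos ht ha hab]),
      ih (ha.trans hab)]

theorem chainLift_filter (hν : ∀ l, support (ν l) ⊆ pathCover T.U γ l) {x : X} {t : ℝ}
    (L : List (List ι)) {a : ℝ} (ha : 0 ≤ a) (hsum : a + (L.map (ν · x)).sum ≤ 1) {e : E}
    (he : p e = γ (x, min (max t 0) a)) :
    T.chainLift γ ν x t L a e = T.chainLift γ ν x t (L.filter (ν · x ≠ 0)) a e := by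
  induction L generalizing a e with
  | nil => rfl
  | cons l L ih =>
    have hrest : 0 ≤ (L.map (ν · x)).sum := List.sum_nonneg (by simp [ν.nonneg])
    simp only [List.map_cons, List.sum_cons] at hsum
    by_cases h : ν l x = 0
    · rw [List.filter_cons_of_neg (by simpa using h), chainLift, h, add_zero,
        T.blockLift_eq_self (fun j => by rw [blockTime_of_eq, blockTime_of_eq])
          (by rwa [blockTime_of_eq])]
      exact ih ha (by linarith) he
    · rw [List.filter_cons_of_pos (by simpa using h), chainLift, chainLift]
      exact ih (add_nonneg ha (ν.nonneg l x)) (by linarith) (T.p_blockLift_length ha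
        (le_add_of_nonneg_right (ν.nonneg l x)) (by linarith) (Or.inl (hν l h)) he)

theorem chainLift_smul {G : Type*} [SMul G X] [SMul G E] [SMul G B]
    (hω : ∀ i (g : G) b e, T.ω i (g • b, g • e) = g • T.ω i (b, e)) {g : G} {x : X}
    (hγ : ∀ s, γ (g • x, s) = g • γ (x, s)) (hν : ∀ l, ν l (g • x) = ν l x) (t : ℝ)
    (L : List (List ι)) (a : ℝ) (e : E) :
    T.chainLift γ ν (g • x) t L a (g • e) = g • T.chainLift γ ν x t L a e := by
  induction L generalizing a e with
  | nil => rfl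
  | cons l L ih => rw [chainLift, chainLift, hν, T.blockLift_smul hω hγ, ih]

theorem continuousAt_chainLift (hγ : Continuous γ)
    (hν : ∀ l, support (ν l) ⊆ pathCover T.U γ l) {z₀ : X × ℝ} (L : List (List ι))
    (hL : ∀ l ∈ L, z₀.1 ∈ pathCover T.U γ l) {a : X → ℝ} (ha : Continuous a) (ha0 : ∀ x, 0 ≤ a x)
    (hsum : ∀ x, a x + (L.map (ν · x)).sum ≤ 1) {e : X × ℝ → E}
    (he : ∀ z, p (e z) = γ (z.1, min (max z.2 0) (a z.1))) (hec : ContinuousAt e z₀) :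
    ContinuousAt (fun z => T.chainLift γ ν z.1 z.2 L (a z.1) (e z)) z₀ := by
  induction L generalizing a e with
  | nil => exact hec
  | cons l L ih =>
    have hrest : ∀ x, 0 ≤ (L.map (ν · x)).sum := fun x => List.sum_nonneg (by simp [ν.nonneg])
    simp only [List.map_cons, List.sum_cons] at hsum
    have hab : ∀ x, a x ≤ a x + ν l x := fun x => le_add_of_nonneg_right (ν.nonneg l x)
    have hb1 : ∀ x, a x + ν l x ≤ 1 := fun x => by linarith [hsum x, hrest x]
    have ha' : Continuous fun x => a x + ν l x := ha.add (ν l).continuous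
    refine ih (fun l' hl' => hL l' (List.mem_cons_of_mem l hl')) ha'
      (fun x => add_nonneg (ha0 x) (ν.nonneg l x)) (fun x => by linarith [hsum x])
      (fun z => T.p_blockLift_length (ha0 z.1) (hab z.1) (hb1 z.1)
        (mem_pathCover_or_eq_add hν l z.1 _) (he z)) ?_
    refine T.continuousAt_blockLift hγ ha ha' hec (hL l List.mem_cons_self)
      (fun z j hj => T.p_blockLift (blockTime_mem_U (mem_pathCover_or_eq_add hν l z.1 _))
        (by rw [blockTime_zero (ha0 z.1) (hab z.1)]; exact he z) j hj) _ le_rfl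

variable [LinearOrder ι]

variable (T γ ν) in
noncomputable def lift (f : X → E) (z : X × ℝ) : E :=
  T.chainLift γ ν z.1 z.2 (ν.finsupport z.1).sort 0 (f z.1)

variable {f : X → E}

theorem chainLift_sort_finsupport (hν : ∀ l, support (ν l) ⊆ pathCover T.U γ l) {x : X} {t : ℝ}
    {s : Finset (List ι)} (hs : ν.finsupport x ⊆ s) {e : E} (he : p e = γ (x, 0)) :
    T.chainLift γ ν x t (ν.finsupport x).sort 0 e = T.chainLift γ ν x t s.sort 0 e := by
  have he' : p e = γ (x, min (max t 0) 0) := by rwa [min_eq_right (le_max_right t 0)]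
  have hsum : ∀ s : Finset (List ι), 0 + (s.sort.map (ν · x)).sum ≤ 1 := fun s => by
    rw [zero_add, Finset.sum_map_sort]
    exact ν.sum_finset_le_one s x
  have hfilter : ∀ s : Finset (List ι), ν.finsupport x ⊆ s →
      s.filter (ν · x ≠ 0) = ν.finsupport x := fun s hs => by
      ext l
      simp only [Finset.mem_filter, ν.mem_finsupport, mem_support]
      exact ⟨And.right, fun h => ⟨hs ((ν.mem_finsupport x).2 h), h⟩⟩
  rw [chainLift_filter hν _ le_rfl (hsum _) he', chainLift_filter hν _ le_rfl (hsum _) he',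
    Finset.sort_filter, Finset.sort_filter, hfilter _ subset_rfl, hfilter s hs]

theorem lift_zero (hf : ∀ x, p (f x) = γ (x, 0)) (x : X) : T.lift γ ν f (x, 0) = f x :=
  chainLift_of_nonpos le_rfl _ le_rfl (hf x)

theorem p_lift (hν : ∀ l, tsupport (ν l) ⊆ pathCover T.U γ l) (hf : ∀ x, p (f x) = γ (x, 0))
    {x : X} {t : ℝ} (ht : t ∈ Icc 0 1) : p (T.lift γ ν f (x, t)) = γ (x, t) := by
  have hsum : (((ν.finsupport x).sort).map (ν · x)).sum = 1 := by
    rw [Finset.sum_map_sort, ν.sum_finsupport (mem_univ x)]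
  have := p_chainLift (fun l => (subset_tsupport _).trans (hν l)) (x := x) (t := t)
    (ν.finsupport x).sort le_rfl (by rw [hsum, zero_add]) (e := f x)
    (by rw [min_eq_right (le_max_right t 0)]; exact hf x)
  rwa [hsum, zero_add, max_eq_left ht.1, min_eq_left ht.2] at this

theorem lift_smul {G : Type*} [SMul G X] [SMul G E] [SMul G B]
    (hω : ∀ i (g : G) b e, T.ω i (g • b, g • e) = g • T.ω i (b, e))
    (hγ : ∀ (g : G) x s, γ (g • x, s) = g • γ (x, s)) (hν : ∀ l (g : G) x, ν l (g • x) = ν l x)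
    (hf : ∀ (g : G) x, f (g • x) = g • f x) (g : G) (x : X) (t : ℝ) :
    T.lift γ ν f (g • x, t) = g • T.lift γ ν f (x, t) := by
  have hsupp : ν.finsupport (g • x) = ν.finsupport x := by
    ext l
    simp only [ν.mem_finsupport, mem_support, hν]
  simp only [lift]
  rw [hsupp, hf, chainLift_smul hω (hγ g x) (fun l => hν l g x)]

theorem continuous_lift (hγ : Continuous γ) (hν : ∀ l, tsupport (ν l) ⊆ pathCover T.U γ l)
    (hfc : Continuous f) (hf : ∀ x, p (f x) = γ (x, 0)) : Continuous (T.lift γ ν f) := by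
  have hν' : ∀ l, support (ν l) ⊆ pathCover T.U γ l := fun l => (subset_tsupport _).trans (hν l)
  refine continuous_iff_continuousAt.2 fun z₀ => ?_
  -- Near `z₀` only the lists of `C` carry weight, and blocks of weight `0` do not matter.
  set C := ν.fintsupport z₀.1
  have hev : ∀ᶠ z in 𝓝 z₀, T.chainLift γ ν z.1 z.2 C.sort 0 (f z.1) = T.lift γ ν f z :=
    (continuous_fst.tendsto z₀ |>.eventually (ν.eventually_finsupport_subset z₀.1)).mono
      fun z hz => (chainLift_sort_finsupport hν' hz (hf z.1)).symm
  have hfz : ContinuousAt (fun z : X × ℝ => f z.1) z₀ := (hfc.comp continuous_fst).continuousAt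
  have hC : ∀ l ∈ C.sort (· ≤ ·), z₀.1 ∈ pathCover T.U γ l := fun l hl =>
    hν l ((ν.mem_fintsupport_iff z₀.1 l).1 (Finset.mem_sort (· ≤ ·) |>.1 hl))
  refine (continuousAt_chainLift hγ hν' _ hC continuous_const (fun _ => le_rfl) (fun x => ?_)
    (fun z => ?_) hfz).congr hev
  · rw [zero_add, Finset.sum_map_sort]
    exact ν.sum_finset_le_one C x
  · rw [min_eq_right (le_max_right _ _)]
    exact hf z.1

end WeakLocalTrivialization

theorem IsWeaklyLocallyTrivialGFibration.exists_weakLocalTrivialization {G E B : Type*} [Group G]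
    [TopologicalSpace G] [TopologicalSpace E] [TopologicalSpace B] [MulAction G E]
    [MulAction G B] {p : E → B} {hpe : ∀ (g : G) (e : E), p (g • e) = g • p e}
    (h : IsWeaklyLocallyTrivialGFibration G p hpe) :
    ∃ T : WeakLocalTrivialization p B, (∀ b, b ∈ T.U b) ∧ (∀ i (g : G), g • T.U i = T.U i) ∧
      ∀ i (g : G) b e, T.ω i (g • b, g • e) = g • T.ω i (b, e) := by
  classical
  choose U hUo hbU hUinv ω hωc hωG hωp hωself using h
  have hmem : ∀ i (g : G) b, g • b ∈ U i ↔ b ∈ U i := fun i g b => by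
    simpa only [hUinv i g] using smul_mem_smul_set_iff (a := g) (s := U i) (x := b)
  let Ω : B → B × E → E := fun i z =>
    if hz : z.1 ∈ U i ∧ p z.2 ∈ U i then (ω i (⟨z.1, hz.1⟩, ⟨z.2, hz.2⟩)).1 else z.2
  have hΩ : ∀ i (z : B × E) (hz : z.1 ∈ U i ∧ p z.2 ∈ U i),
      Ω i z = (ω i (⟨z.1, hz.1⟩, ⟨z.2, hz.2⟩)).1 :=
    fun i z hz => dif_pos hz
  refine ⟨⟨U, hUo, Ω, ?_, ?_, ?_⟩, hbU, hUinv, ?_⟩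
  · intro i
    rw [continuousOn_iff_continuous_domRestrict]
    refine (continuous_subtype_val.comp ((hωc i).comp (Continuous.prodMk ?_ ?_))).congr
      fun z => (hΩ i z z.2).symm
    · exact (continuous_fst.comp continuous_subtype_val).subtype_mk _
    · exact (continuous_snd.comp continuous_subtype_val).subtype_mk _
  · intro i b e hb he
    rw [hΩ i (b, e) ⟨hb, he⟩]
    exact hωp i _
  · intro i e
    by_cases he : p e ∈ U i
    · rw [hΩ i (p e, e) ⟨he, he⟩]
      exact congrArg Subtype.val (hωself i ⟨e, he⟩)
    · exact dif_neg fun h => he h.1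
  · intro i g b e
    show Ω i (g • b, g • e) = g • Ω i (b, e)
    by_cases hz : b ∈ U i ∧ p e ∈ U i
    · rw [hΩ i (b, e) hz, hΩ i (g • b, g • e) ⟨(hmem i g b).2 hz.1, hpe g e ▸ (hmem i g _).2 hz.2⟩]
      exact hωG i g (⟨b, hz.1⟩, ⟨e, hz.2⟩)
    · have hz' : ¬(g • b ∈ U i ∧ p (g • e) ∈ U i) := by rwa [hpe, hmem, hmem]
      simp only [Ω, dif_neg hz, dif_neg hz']

theorem isHurewiczGFibration_of_weaklyLocallyTrivial_general
    (G : Type*) [Group G] [TopologicalSpace G]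
    [CompactSpace G]
    {E B : Type*} [TopologicalSpace E] [TopologicalSpace B]
    [ParacompactSpace B] [T2Space B]
    [MulAction G E] [MulAction G B] [ContinuousSMul G B]
    (p : E → B)
    (hpe : ∀ (g : G) (e : E), p (g • e) = g • p e)
    (hwlt : IsWeaklyLocallyTrivialGFibration G p hpe) :
    IsHurewiczGFibration G (fun (g : G) (e : E) => g • e) (fun (g : G) (b : B) => g • b)
      p := by
  intro X _ _ _ f F hf hF hfG hFG hF0
  classical
  -- Any linear order on `B` fixes the order in which the blocks are concatenated.
  let _ : LinearOrder B := linearOrderOfSTO WellOrderingRel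
  obtain ⟨T, hTU, hTinv, hTω⟩ := hwlt.exists_weakLocalTrivialization
  obtain ⟨φ, hφU, hφG⟩ := exists_invariant_partitionOfUnity_isSubordinate G T.U T.isOpen_U hTinv
    (iUnion_eq_univ_iff.2 fun b => ⟨b, hTU b⟩)
  set γ : X × ℝ → B := fun z => F (z.1, projIcc 0 1 zero_le_one z.2)
  have hγ : Continuous γ := hF.comp (continuous_fst.prodMk (continuous_projIcc.comp continuous_snd))
  have hγG : ∀ (g : G) x s, γ (g • x, s) = g • γ (x, s) := fun g x s => hFG g x _
  obtain ⟨ν, hνU, hνφ⟩ := exists_partitionOfUnity_tsupport_subset_pathCover hφU hγ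
  have hνG : ∀ l (g : G) x, ν l (g • x) = ν l x := fun l g x =>
    hνφ _ _ (fun i t => by rw [hγG, hφG]) l
  have hf0 : ∀ x, p (f x) = γ (x, 0) := fun x => by simp [γ, hF0]
  refine ⟨fun z => T.lift γ ν f (z.1, z.2), (T.continuous_lift hγ hνU hf hf0).comp
    (continuous_fst.prodMk (continuous_subtype_val.comp continuous_snd)),
    fun g x t => T.lift_smul hTω hγG hνG hfG g x t, fun z => ?_, fun x => T.lift_zero hf0 x⟩
  rw [T.p_lift hνU hf0 z.2.2]
  simp [γ, projIcc_of_mem]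

/-- For a compact Hausdorff group `G` and a paracompact Hausdorff base `B`, every weakly
locally trivial `G`-fibration is a Hurewicz `G`-fibration. -/
theorem isHurewiczGFibration_of_weaklyLocallyTrivial
    (G : Type*) [Group G] [TopologicalSpace G] [IsTopologicalGroup G]
    [CompactSpace G] [T2Space G]
    {E B : Type*} [TopologicalSpace E] [TopologicalSpace B]
    [ParacompactSpace B] [T2Space B]
    [MulAction G E] [MulAction G B] [ContinuousSMul G E] [ContinuousSMul G B]
    (p : E → B) (hp : Continuous p)
    (hpe : ∀ (g : G) (e : E), p (g • e) = g • p e)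
    (hwlt : IsWeaklyLocallyTrivialGFibration G p hpe) :
    IsHurewiczGFibration G (fun (g : G) (e : E) => g • e) (fun (g : G) (b : B) => g • b)
      p :=
  isHurewiczGFibration_of_weaklyLocallyTrivial_general G p hpe hwlt
end
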